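/- arXiv:1904.09899 — 4 statements merged into one kernel-verified Lean document; each statement's English description precedes it below -/
import Mathlib

section
/- The independence-of-agents axiom scheme is valid on all Tstit frames: in any relational model whose frame satisfies that R_□ is an equivalence relation, each R_i is an equivalence relation contained in R_□, and condition (C2) holds, every world satisfies (⋀_{i ∈ Ag} ◇[i]φ_i) → ◇(⋀_{i ∈ Ag} [i]φ_i), for any formulas φ_1,...,φ_n. -/
/-- The independence-of-agents axiom scheme
`(⋀_{i∈Ag} ◇[i]φ_i) → ◇(⋀_{i∈Ag} [i]φ_i)` is valid on all Tstit frames. -/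
theorem ioa_axiom_valid {W Ag : Type} [Fintype Ag]
    (RB : W → W → Prop) (Ri : Ag → W → W → Prop)
    (hRB : Equivalence RB)
    (hRi : ∀ i, Equivalence (Ri i))
    (hC1 : ∀ i w u, Ri i w u → RB w u)
    (hC2 : ∀ u : Ag → W, (∀ i j, RB (u i) (u j)) → ∃ v, ∀ i, Ri i (u i) v)
    (φ : Ag → W → Prop) :
    ∀ w : W, (∀ i, ∃ u, RB w u ∧ ∀ v, Ri i u v → φ i v) →
      ∃ u, RB w u ∧ ∀ i, ∀ v, Ri i u v → φ i v := by
  intro w h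
  by_cases hA : Nonempty Ag
  · choose u hu hbox using h
    obtain ⟨v, hv⟩ := hC2 u (fun i j => hRB.trans (hRB.symm (hu i)) (hu j))
    obtain ⟨i₀⟩ := hA
    refine ⟨v, hRB.trans (hu i₀) (hC1 i₀ _ _ (hv i₀)), fun i x hx => ?_⟩
    exact hbox i x ((hRi i).trans (hv i) hx)
  · exact ⟨w, hRB.refl w, fun i => absurd ⟨i⟩ hA⟩
end

section
/- The Gabbay-style irreflexivity rule is sound for Tstit frames: if the formula (□¬p ∧ □(Gp ∧ Hp)) → φ is valid on all Tstit frames, where the propositional variable p does not occur in φ, then φ is valid on all Tstit frames. -/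
/-- Formulas of the temporal STIT language 𝓛_Tstit (duals are definable
via negation). -/
inductive TFml (Ag : Type) : Type
  | var (p : ℕ)
  | neg (φ : TFml Ag)
  | and (φ ψ : TFml Ag)
  | box (φ : TFml Ag)
  | boxi (i : Ag) (φ : TFml Ag)
  | boxAg (φ : TFml Ag)
  | G (φ : TFml Ag)
  | H (φ : TFml Ag)

/-- Occurrence of a propositional variable in a formula. -/
def TFml.occurs {Ag : Type} (p : ℕ) : TFml Ag → Prop
  | .var q => p = q
  | .neg φ => φ.occurs p
  | .and φ ψ => φ.occurs p ∨ ψ.occurs p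
  | .box φ => φ.occurs p
  | .boxi _ φ => φ.occurs p
  | .boxAg φ => φ.occurs p
  | .G φ => φ.occurs p
  | .H φ => φ.occurs p

/-- Relational Tstit frames (Definition 2 of the paper). -/
structure TstitFrame (Ag : Type) where
  W : Type
  nonempty : Nonempty W
  RB : W → W → Prop
  Ri : Ag → W → W → Prop
  RAg : W → W → Prop
  RG : W → W → Prop
  RH : W → W → Prop
  RB_equiv : Equivalence RB
  Ri_equiv : ∀ i, Equivalence (Ri i)
  RAg_equiv : Equivalence RAg
  C1 : ∀ i w u, Ri i w u → RB w u
  C2 : ∀ u : Ag → W, (∀ i j, RB (u i) (u j)) → ∃ v, ∀ i, Ri i (u i) v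
  C3 : ∀ w u, RAg w u ↔ ∀ i, Ri i w u
  RG_trans : ∀ w u v, RG w u → RG u v → RG w v
  RG_serial : ∀ w, ∃ u, RG w u
  RH_conv : ∀ w u, RH w u ↔ RG u w
  C4 : ∀ w u v, RG w u → RG w v → RG u v ∨ u = v ∨ RG v u
  C5 : ∀ w u v, RH w u → RH w v → RH u v ∨ u = v ∨ RH v u
  C6 : ∀ w u z, RG w u → RB u z → ∃ v, RAg w v ∧ RG v z
  C7 : ∀ w u, RB w u → ¬ RG w u

/-- Kripke satisfaction over a Tstit frame with valuation `V`. -/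
def TFml.sat {Ag : Type} (F : TstitFrame Ag) (V : ℕ → F.W → Prop) :
    TFml Ag → F.W → Prop
  | .var p, w => V p w
  | .neg φ, w => ¬ φ.sat F V w
  | .and φ ψ, w => φ.sat F V w ∧ ψ.sat F V w
  | .box φ, w => ∀ u, F.RB w u → φ.sat F V u
  | .boxi i φ, w => ∀ u, F.Ri i w u → φ.sat F V u
  | .boxAg φ, w => ∀ u, F.RAg w u → φ.sat F V u
  | .G φ, w => ∀ u, F.RG w u → φ.sat F V u
  | .H φ, w => ∀ u, F.RH w u → φ.sat F V u

/-- Validity on all Tstit frames. -/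
def TValid {Ag : Type} (φ : TFml Ag) : Prop :=
  ∀ (F : TstitFrame Ag) (V : ℕ → F.W → Prop) (w : F.W), φ.sat F V w

/-- Satisfaction only depends on the valuation of occurring variables. -/
lemma TFml.sat_congr {Ag : Type} (F : TstitFrame Ag)
    (V V' : ℕ → F.W → Prop) (φ : TFml Ag)
    (hV : ∀ q, φ.occurs q → ∀ v, V q v ↔ V' q v) :
    ∀ w, φ.sat F V w ↔ φ.sat F V' w := by
  induction φ with
  | var q => exact fun w => hV q rfl w
  | neg φ ih =>
      exact fun w => not_congr (ih (fun q hq v => hV q hq v) w)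
  | and φ ψ ih1 ih2 =>
      exact fun w => and_congr (ih1 (fun q hq v => hV q (Or.inl hq) v) w)
        (ih2 (fun q hq v => hV q (Or.inr hq) v) w)
  | box φ ih =>
      exact fun w => forall_congr' fun u =>
        imp_congr Iff.rfl (ih (fun q hq v => hV q hq v) u)
  | boxi i φ ih =>
      exact fun w => forall_congr' fun u =>
        imp_congr Iff.rfl (ih (fun q hq v => hV q hq v) u)
  | boxAg φ ih =>
      exact fun w => forall_congr' fun u =>
        imp_congr Iff.rfl (ih (fun q hq v => hV q hq v) u)
  | G φ ih =>
      exact fun w => forall_congr' fun u =>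
        imp_congr Iff.rfl (ih (fun q hq v => hV q hq v) u)
  | H φ ih =>
      exact fun w => forall_congr' fun u =>
        imp_congr Iff.rfl (ih (fun q hq v => hV q hq v) u)

/-- The Gabbay-style irreflexivity rule is sound for Tstit
frames: if `(□¬p ∧ □(Gp ∧ Hp)) → φ` is valid on all Tstit frames and `p`
does not occur in `φ`, then `φ` is valid on all Tstit frames.
(The implication `A → φ` is encoded as `¬(A ∧ ¬φ)`.) -/
theorem irreflexivity_rule_sound {Ag : Type} (φ : TFml Ag) (p : ℕ)
    (hp : ¬ φ.occurs p)
    (h : TValid (TFml.neg (TFml.and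
      (TFml.and (TFml.box (TFml.neg (TFml.var p)))
        (TFml.box (TFml.and (TFml.G (TFml.var p)) (TFml.H (TFml.var p)))))
      (TFml.neg φ)))) :
    TValid φ := by
  intro F V w
  set V' : ℕ → F.W → Prop := fun q v => if q = p then ¬ F.RB w v else V q v
    with hV'
  have key := h F V' w
  simp only [TFml.sat] at key
  have hA : (∀ u, F.RB w u → ¬ V' p u) ∧
      (∀ u, F.RB w u → (∀ v, F.RG u v → V' p v) ∧ (∀ v, F.RH u v → V' p v)) := by
    constructor
    · intro u hu
      simp only [hV', if_pos rfl, not_not]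
      exact hu
    · intro u hu
      constructor
      · intro v hv
        simp only [hV', if_pos rfl]
        intro hwv
        exact F.C7 u v (F.RB_equiv.trans (F.RB_equiv.symm hu) hwv) hv
      · intro v hv
        rw [F.RH_conv] at hv
        simp only [hV', if_pos rfl]
        intro hwv
        exact F.C7 v u (F.RB_equiv.trans (F.RB_equiv.symm hwv) hu) hv
  have hφ' : φ.sat F V' w := by
    by_contra hc
    exact key ⟨hA, hc⟩
  rw [TFml.sat_congr F V V' φ
    (fun q hq v => by
      have : q ≠ p := fun e => hp (e ▸ hq)
      simp [hV', this]) w]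
  exact hφ'
end

section
/- The IOA^x axiom is valid on Xstit frames: for disjoint groups A, B ⊆ Ag and any formulas φ, ψ, every world of every model over an Xstit frame satisfies ◇[A]^x φ ∧ ◇[B]^x ψ → ◇([A]^x φ ∧ [B]^x ψ). -/
/-- The IOA^x axiom `◇[A]^x φ ∧ ◇[B]^x ψ → ◇([A]^x φ ∧ [B]^x ψ)`
is valid on Xstit frames for disjoint groups `A, B`, using (D3)(iv). -/
theorem xstit_ioa_valid {W Ag : Type}
    (RB : W → W → Prop) (R : Set Ag → W → W → Prop)
    (A B : Set Ag) (hdisj : Disjoint A B)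
    (hD3iv : ∀ w1 w2 w3, RB w1 w2 → RB w1 w3 →
      ∃ w4, RB w1 w4 ∧ (∀ w5, R A w4 w5 → R A w2 w5)
        ∧ (∀ w6, R B w4 w6 → R B w3 w6))
    (φ ψ : W → Prop) :
    ∀ w : W,
      (∃ u, RB w u ∧ ∀ v, R A u v → φ v) →
      (∃ u, RB w u ∧ ∀ v, R B u v → ψ v) →
      ∃ u, RB w u ∧ (∀ v, R A u v → φ v) ∧ (∀ v, R B u v → ψ v) := by
  rintro w ⟨u1, hu1, hφ⟩ ⟨u2, hu2, hψ⟩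
  obtain ⟨w4, hw4, hA, hB⟩ := hD3iv w u1 u2 hu1 hu2
  exact ⟨w4, hw4, fun v hv => hφ v (hA v hv), fun v hv => hψ v (hB v hv)⟩
end

section
/- In the canonical temporal Kripke STIT model constructed from Ldm-maximally-consistent sets indexed by natural numbers, the 'no choice between undivided histories' condition (C6) holds: R_G ∘ R_□ ⊆ R_Ag ∘ R_G, where R_G relates (w,j) to (w,k) iff j < k, R_□ at index k > 0 is ⋂_i R^pres_i, and R_Ag at every index equals ⋂_i R^pres_i lifted to that index. -/
/-- In the canonical temporal Kripke STIT model over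
`W^pres × ℕ`, condition (C6) holds: `R_G ∘ R_□ ⊆ R_Ag ∘ R_G`. -/
theorem canonical_C6 {Wp Ag : Type} [Fintype Ag]
    (Rpb : Wp → Wp → Prop) (Rp : Ag → Wp → Wp → Prop)
    (RG RB RAg : Wp × ℕ → Wp × ℕ → Prop)
    (hRG : ∀ (w u : Wp) (j k : ℕ), RG (w, j) (u, k) ↔ w = u ∧ j < k)
    (hRB : ∀ (w u : Wp) (j k : ℕ), RB (w, j) (u, k) ↔
      j = k ∧ (if j = 0 then Rpb w u else ∀ i, Rp i w u))
    (hRAg : ∀ (w u : Wp) (j k : ℕ), RAg (w, j) (u, k) ↔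
      j = k ∧ ∀ i, Rp i w u) :
    ∀ x u v : Wp × ℕ, RG x u → RB u v → ∃ y, RAg x y ∧ RG y v := by
  rintro ⟨w, j⟩ ⟨u, k⟩ ⟨v, l⟩ h1 h2
  rw [hRG] at h1
  rw [hRB] at h2
  obtain ⟨rfl, hjk⟩ := h1
  obtain ⟨rfl, h2⟩ := h2
  rw [if_neg (Nat.pos_of_ne_zero (by omega)).ne'] at h2
  exact ⟨(v, j), (hRAg w v j j).mpr ⟨rfl, h2⟩, (hRG v v j k).mpr ⟨rfl, hjk⟩⟩
end
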